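/- Let n ≥ 1 and let i, i' : Fin n → ℕ be exponent vectors with the same total degree, i.e. Σⱼ iⱼ = Σⱼ i'ⱼ. Then the following are equivalent: (1) for every nonincreasing vector a : Fin n → ℝ (i.e. a₀ ≥ a₁ ≥ … ≥ a_{n-1}), one has Σⱼ iⱼaⱼ ≥ Σⱼ i'ⱼaⱼ; (2) for every k < n, the partial sums satisfy Σ_{j ≤ k} iⱼ ≥ Σ_{j ≤ k} i'ⱼ. -/
import Mathlib

lemma abel_aux (n : ℕ) (c b : ℕ → ℝ) (hb : Antitone b)
    (h0 : ∑ j ∈ Finset.range n, c j = 0)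
    (hS : ∀ k, k + 1 < n → 0 ≤ ∑ j ∈ Finset.range (k + 1), c j) :
    0 ≤ ∑ j ∈ Finset.range n, c j * b j := by
  have key := Finset.sum_range_by_parts b c n
  simp only [smul_eq_mul] at key
  have : ∑ j ∈ Finset.range n, c j * b j = ∑ j ∈ Finset.range n, b j * c j := by
    simp [mul_comm]
  rw [this, key, h0, mul_zero, zero_sub, neg_nonneg]
  apply Finset.sum_nonpos
  intro k hk
  rw [Finset.mem_range] at hk
  have h1 : b (k + 1) - b k ≤ 0 := by
    have := hb (Nat.le_succ k); linarith
  have h2 : 0 ≤ ∑ j ∈ Finset.range (k + 1), c j := hS k (by omega)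
  exact mul_nonpos_of_nonpos_of_nonneg h1 h2

lemma filter_sum_eq {M : Type*} [AddCommMonoid M] (n k : ℕ) (hk : k < n) (g : Fin n → M) :
    ∑ j ∈ Finset.univ.filter (· ≤ (⟨k, hk⟩ : Fin n)), g j =
      ∑ m ∈ Finset.range (k + 1), if h : m < n then g ⟨m, h⟩ else 0 := by
  rw [Finset.sum_filter]
  have h1 : ∑ j : Fin n, (if j ≤ (⟨k, hk⟩ : Fin n) then g j else 0) =
      ∑ m ∈ Finset.range n, (if h : m < n then (if m ≤ k then g ⟨m, h⟩ else 0) else 0) := by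
    rw [← Fin.sum_univ_eq_sum_range (fun m => if h : m < n then (if m ≤ k then g ⟨m, h⟩ else 0) else 0) n]
    apply Finset.sum_congr rfl
    intro j _
    simp [j.isLt, Fin.le_def]
  rw [h1]
  rw [Finset.sum_congr rfl (g := fun m => if m ≤ k then (if h : m < n then g ⟨m, h⟩ else 0) else 0)
    (by intro m hm; by_cases h : m < n <;> by_cases h' : m ≤ k <;> simp [h, h'])]
  rw [← Finset.sum_filter]
  congr 1
  ext m
  simp [Nat.lt_succ_iff]
  omega

/-- The dominance order on exponent vectors of a fixed total degree is compatible with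
the weight order given by nonincreasing weight vectors: for exponent vectors `i, i'` of the
same total degree, the weight of `i` dominates the weight of `i'` for every nonincreasing
real weight vector `a` if and only if all the partial sums of `i` dominate those of `i'`. -/
theorem dominance_iff_weight_order (n : ℕ) (hn : 1 ≤ n) (i i' : Fin n → ℕ)
    (hdeg : ∑ j, i j = ∑ j, i' j) :
    (∀ a : Fin n → ℝ, Antitone a → ∑ j, (i' j : ℝ) * a j ≤ ∑ j, (i j : ℝ) * a j) ↔
    (∀ k : Fin n, ∑ j ∈ Finset.univ.filter (· ≤ k), i' j ≤
      ∑ j ∈ Finset.univ.filter (· ≤ k), i j) := by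
  constructor
  · intro h k
    set a : Fin n → ℝ := fun j => if j ≤ k then 1 else 0 with ha
    have haa : Antitone a := by
      intro j j' hjj'
      simp only [ha]
      by_cases h' : j' ≤ k
      · rw [if_pos h', if_pos (hjj'.trans h')]
      · rw [if_neg h']
        by_cases h'' : j ≤ k <;> simp [h'']
    have := h a haa
    have e1 : ∀ (f : Fin n → ℕ), ∑ j, (f j : ℝ) * a j =
        ((∑ j ∈ Finset.univ.filter (· ≤ k), f j : ℕ) : ℝ) := by
      intro f
      rw [Finset.sum_filter, Nat.cast_sum]
      apply Finset.sum_congr rfl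
      intro j _
      by_cases h' : j ≤ k <;> simp [ha, h']
    rw [e1, e1] at this
    exact_mod_cast this
  · intro h a ha
    rw [← sub_nonneg, ← Finset.sum_sub_distrib]
    simp_rw [← sub_mul]
    set c : ℕ → ℝ := fun m => if h : m < n then (i ⟨m, h⟩ : ℝ) - (i' ⟨m, h⟩ : ℝ) else 0 with hc
    set b : ℕ → ℝ := fun m => if h : m < n then a ⟨m, h⟩ else a ⟨n - 1, by omega⟩ with hbdef
    have hfin : ∀ (F : ℕ → ℝ), ∑ m ∈ Finset.range n, F m = ∑ j : Fin n, F j.val :=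
      fun F => (Fin.sum_univ_eq_sum_range F n).symm
    have hbmono : Antitone b := by
      intro m m' hmm'
      simp only [hbdef]
      by_cases h1 : m' < n
      · rw [dif_pos h1, dif_pos (lt_of_le_of_lt hmm' h1)]
        exact ha (by simpa [Fin.le_def] using hmm')
      · rw [dif_neg h1]
        by_cases h2 : m < n
        · rw [dif_pos h2]
          exact ha (by simp [Fin.le_def]; omega)
        · rw [dif_neg h2]
    have h0 : ∑ j ∈ Finset.range n, c j = 0 := by
      rw [hfin]
      have : ∀ j : Fin n, c j.val = (i j : ℝ) - (i' j : ℝ) := by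
        intro j; simp [hc, j.isLt]
      simp_rw [this, Finset.sum_sub_distrib]
      rw [← Nat.cast_sum, ← Nat.cast_sum, hdeg, sub_self]
    have hS : ∀ k, k + 1 < n → 0 ≤ ∑ j ∈ Finset.range (k + 1), c j := by
      intro k hk
      have hkn : k < n := by omega
      have := filter_sum_eq n k hkn (fun j => (i j : ℝ) - (i' j : ℝ))
      rw [← Finset.sum_congr rfl (fun m hm => rfl : ∀ m ∈ Finset.range (k+1), c m = c m)]
      have hcm : ∀ m ∈ Finset.range (k + 1), c m =
          (if h : m < n then ((i ⟨m, h⟩ : ℝ) - (i' ⟨m, h⟩ : ℝ)) else 0) := fun m _ => rfl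
      rw [Finset.sum_congr rfl hcm, ← this, Finset.sum_sub_distrib, sub_nonneg,
        ← Nat.cast_sum, ← Nat.cast_sum, Nat.cast_le]
      exact h ⟨k, hkn⟩
    have key := abel_aux n c b hbmono h0 hS
    rw [hfin] at key
    have : ∀ j : Fin n, c j.val * b j.val = ((i j : ℝ) - (i' j : ℝ)) * a j := by
      intro j; simp [hc, hbdef, j.isLt]
    simpa [this] using key
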